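/- Let (L, [·,·], Δ, α, r) be a coboundary Hom-Lie superbialgebra. Then the following are equivalent: (1) L is quasi-triangular, i.e. [[r,r]]^α = 0; (2) (α⊗Δ)(r) = −[r₁₂, r₁₃]; (3) (Δ⊗α)(r) = [r₁₃, r₂₃]. -/

import Mathlib

open TensorProduct

variable (K : Type*) [Field K] [CharZero K]

/-- The super sign `(-1)^{p·q}` for parities `p q : ZMod 2`. -/
def eps (p q : ZMod 2) : K := (-1 : K) ^ (p.val * q.val)

variable {K}

section Defs

variable {L M : Type*} [AddCommGroup L] [Module K L] [AddCommGroup M] [Module K M]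

/-- `x` is homogeneous of parity `p` with respect to the grading involution `σ`
(`σ` acts as `(-1)^i` on the degree-`i` part of the `ℤ₂`-graded space). -/
def IsHomog (σ : L →ₗ[K] L) (p : ZMod 2) (x : L) : Prop :=
  σ x = ((-1 : K) ^ p.val) • x

/-- The operator multiplying a homogeneous element of parity `q` by `(-1)^{p·q}`. -/
noncomputable def signPow (σ : L →ₗ[K] L) (p : ZMod 2) : L →ₗ[K] L :=
  ((2 : K)⁻¹ * (1 + (-1 : K) ^ p.val)) • (LinearMap.id : L →ₗ[K] L)
    + ((2 : K)⁻¹ * (1 - (-1 : K) ^ p.val)) • σ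

/-- The operator multiplying `x ⊗ y` (with `x, y` homogeneous of parities `p, q`)
by the Koszul sign `(-1)^{p·q}`. -/
noncomputable def signOp (σL : L →ₗ[K] L) (σM : M →ₗ[K] M) :
    L ⊗[K] M →ₗ[K] L ⊗[K] M :=
  (2 : K)⁻¹ • ((LinearMap.id : L ⊗[K] M →ₗ[K] L ⊗[K] M)
    + TensorProduct.map σL LinearMap.id
    + TensorProduct.map LinearMap.id σM
    - TensorProduct.map σL σM)

/-- The super twist `τ(x ⊗ y) = (-1)^{|x||y|} y ⊗ x`. -/
noncomputable def superTwist (σ : L →ₗ[K] L) : L ⊗[K] L →ₗ[K] L ⊗[K] L :=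
  (TensorProduct.comm K L L).toLinearMap ∘ₗ signOp σ σ

/-- The super cyclic map `ξ(x ⊗ y ⊗ z) = (-1)^{|x|(|y|+|z|)} y ⊗ z ⊗ x`. -/
noncomputable def superCyclic (σ : L →ₗ[K] L) :
    L ⊗[K] (L ⊗[K] L) →ₗ[K] L ⊗[K] (L ⊗[K] L) :=
  (TensorProduct.assoc K L L L).toLinearMap
    ∘ₗ (TensorProduct.comm K L (L ⊗[K] L)).toLinearMap
    ∘ₗ signOp σ (TensorProduct.map σ σ)

/-- The adjoint action `ad_x` on `L ⊗ L`, for `x` homogeneous of parity `p`: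
`ad_x(y₁ ⊗ y₂) = [x,y₁] ⊗ α(y₂) + (-1)^{|x||y₁|} α(y₁) ⊗ [x,y₂]`. -/
noncomputable def adT (σ : L →ₗ[K] L) (br : L →ₗ[K] L →ₗ[K] L) (α : L →ₗ[K] L)
    (p : ZMod 2) (x : L) : L ⊗[K] L →ₗ[K] L ⊗[K] L :=
  TensorProduct.map (br x) α + TensorProduct.map (α ∘ₗ signPow σ p) (br x)

/-- The adjoint action `ad_x` on `L ⊗ (L ⊗ L)`, for `x` homogeneous of parity `p`. -/
noncomputable def adT3 (σ : L →ₗ[K] L) (br : L →ₗ[K] L →ₗ[K] L) (α : L →ₗ[K] L)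
    (p : ZMod 2) (x : L) :
    L ⊗[K] (L ⊗[K] L) →ₗ[K] L ⊗[K] (L ⊗[K] L) :=
  TensorProduct.map (br x) (TensorProduct.map α α)
    + TensorProduct.map (α ∘ₗ signPow σ p) (TensorProduct.map (br x) α)
    + TensorProduct.map (α ∘ₗ signPow σ p)
        (TensorProduct.map (α ∘ₗ signPow σ p) (br x))

/-- A Hom-Lie superalgebra `(L, [·,·], α)` with grading involution `σ`:
the bracket and `α` are even, the bracket is skew-supersymmetric and
satisfies the Hom-super-Jacobi identity. -/
def IsHomLieSuperalgebra (σ : L →ₗ[K] L) (br : L →ₗ[K] L →ₗ[K] L) (α : L →ₗ[K] L) : Prop :=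
  σ ∘ₗ σ = LinearMap.id
  ∧ (∀ x y, σ (br x y) = br (σ x) (σ y))
  ∧ (∀ x, σ (α x) = α (σ x))
  ∧ (∀ p q x y, IsHomog σ p x → IsHomog σ q y → br x y = -(eps K p q) • br y x)
  ∧ (∀ p q r x y z, IsHomog σ p x → IsHomog σ q y → IsHomog σ r z →
      eps K p r • br (α x) (br y z) + eps K r q • br (α z) (br x y)
        + eps K q p • br (α y) (br z x) = 0)

/-- Multiplicativity: `α([x,y]) = [α(x), α(y)]`. -/
def IsMultiplicative (br : L →ₗ[K] L →ₗ[K] L) (α : L →ₗ[K] L) : Prop :=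
  ∀ x y, α (br x y) = br (α x) (α y)

/-- A Hom-Lie supercoalgebra `(L, Δ, α)` with grading involution `σ`. -/
def IsHomLieSupercoalgebra (σ α : L →ₗ[K] L) (Δ : L →ₗ[K] L ⊗[K] L) : Prop :=
  σ ∘ₗ σ = LinearMap.id
  ∧ (∀ x, σ (α x) = α (σ x))
  ∧ TensorProduct.map σ σ ∘ₗ Δ = Δ ∘ₗ σ
  ∧ (∀ x, ∃ u, Δ x = u - superTwist σ u)
  ∧ (LinearMap.id + superCyclic σ + superCyclic σ ∘ₗ superCyclic σ)
      ∘ₗ TensorProduct.map α Δ ∘ₗ Δ = 0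

/-- Co-multiplicativity: `Δ ∘ α = α^{⊗2} ∘ Δ`. -/
def IsComultiplicative (α : L →ₗ[K] L) (Δ : L →ₗ[K] L ⊗[K] L) : Prop :=
  Δ ∘ₗ α = TensorProduct.map α α ∘ₗ Δ

/-- A Hom-Lie superbialgebra `(L, [·,·], Δ, α)`. -/
def IsHomLieSuperbialgebra (σ : L →ₗ[K] L) (br : L →ₗ[K] L →ₗ[K] L) (α : L →ₗ[K] L)
    (Δ : L →ₗ[K] L ⊗[K] L) : Prop :=
  IsHomLieSuperalgebra σ br α
  ∧ IsHomLieSupercoalgebra σ α Δ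
  ∧ ∀ p q x y, IsHomog σ p x → IsHomog σ q y →
      Δ (br x y) = adT σ br α p (α x) (Δ y) - eps K p q • adT σ br α q (α y) (Δ x)

/-- A multiplicative Hom-Lie superbialgebra. -/
def IsMultHomLieSuperbialgebra (σ : L →ₗ[K] L) (br : L →ₗ[K] L →ₗ[K] L) (α : L →ₗ[K] L)
    (Δ : L →ₗ[K] L ⊗[K] L) : Prop :=
  IsHomLieSuperbialgebra σ br α Δ ∧ IsMultiplicative br α ∧ IsComultiplicative α Δ

/-- An admissible Hom-Lie superalgebra: `[(Id - α²)(x), α(y)] = 0`. -/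
def IsAdmissible (σ : L →ₗ[K] L) (br : L →ₗ[K] L →ₗ[K] L) (α : L →ₗ[K] L) : Prop :=
  IsHomLieSuperalgebra σ br α ∧ ∀ x y, br (x - α (α x)) (α y) = 0

/-- A morphism of Hom-Lie superbialgebras: an even linear map commuting with the
twist maps, the brackets and the cobrackets. -/
def IsBialgMorphism {L₂ : Type*} [AddCommGroup L₂] [Module K L₂]
    (σ₁ : L →ₗ[K] L) (br₁ : L →ₗ[K] L →ₗ[K] L) (α₁ : L →ₗ[K] L) (Δ₁ : L →ₗ[K] L ⊗[K] L)
    (σ₂ : L₂ →ₗ[K] L₂) (br₂ : L₂ →ₗ[K] L₂ →ₗ[K] L₂) (α₂ : L₂ →ₗ[K] L₂)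
    (Δ₂ : L₂ →ₗ[K] L₂ ⊗[K] L₂) (f : L →ₗ[K] L₂) : Prop :=
  (∀ x, σ₂ (f x) = f (σ₁ x)) ∧ (∀ x, α₂ (f x) = f (α₁ x))
  ∧ (∀ x y, f (br₁ x y) = br₂ (f x) (f y))
  ∧ TensorProduct.map f f ∘ₗ Δ₁ = Δ₂ ∘ₗ f

/-- A representation `ρ` of the Hom-Lie superalgebra `(L, br, αg)` on `(M, σM)`
with respect to `A`. -/
def IsRepresentation (σg : L →ₗ[K] L) (br : L →ₗ[K] L →ₗ[K] L) (αg : L →ₗ[K] L)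
    (σM A : M →ₗ[K] M) (ρ : L →ₗ[K] M →ₗ[K] M) : Prop :=
  (∀ x v, σM (ρ x v) = ρ (σg x) (σM v))
  ∧ (∀ x, ρ (αg x) ∘ₗ A = A ∘ₗ ρ x)
  ∧ (∀ p q x y, IsHomog σg p x → IsHomog σg q y →
      ρ (br x y) ∘ₗ A = ρ (αg x) ∘ₗ ρ y - eps K p q • (ρ (αg y) ∘ₗ ρ x))

/-- The signed middle-four interchange
`(r₁ ⊗ r₂) ⊗ (r₁' ⊗ r₂') ↦ (-1)^{|r₂||r₁'|} (r₁ ⊗ r₁') ⊗ (r₂ ⊗ r₂')`. -/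
noncomputable def signedMidSwap (σ : L →ₗ[K] L) :
    (L ⊗[K] L) ⊗[K] (L ⊗[K] L) →ₗ[K] (L ⊗[K] L) ⊗[K] (L ⊗[K] L) :=
  (TensorProduct.assoc K (L ⊗[K] L) L L).toLinearMap
    ∘ₗ TensorProduct.map (TensorProduct.assoc K L L L).symm.toLinearMap LinearMap.id
    ∘ₗ TensorProduct.map (TensorProduct.map LinearMap.id (superTwist σ)) LinearMap.id
    ∘ₗ TensorProduct.map (TensorProduct.assoc K L L L).toLinearMap LinearMap.id
    ∘ₗ (TensorProduct.assoc K (L ⊗[K] L) L L).symm.toLinearMap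

/-- `[r₁₂, r'₁₃] = Σ (-1)^{|r'₁||r₂|} [r₁,r'₁] ⊗ α(r₂) ⊗ α(r'₂)`. -/
noncomputable def br1213 (σ : L →ₗ[K] L) (br : L →ₗ[K] L →ₗ[K] L) (α : L →ₗ[K] L)
    (r r' : L ⊗[K] L) : L ⊗[K] (L ⊗[K] L) :=
  TensorProduct.map (TensorProduct.lift br) (TensorProduct.map α α)
    (signedMidSwap σ (r ⊗ₜ[K] r'))

/-- `[r₁₂, r'₂₃] = Σ α(r₁) ⊗ [r₂,r'₁] ⊗ α(r'₂)`. -/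
noncomputable def br1223 (br : L →ₗ[K] L →ₗ[K] L) (α : L →ₗ[K] L)
    (r r' : L ⊗[K] L) : L ⊗[K] (L ⊗[K] L) :=
  TensorProduct.map α
      (TensorProduct.map (TensorProduct.lift br) α
        ∘ₗ (TensorProduct.assoc K L L L).symm.toLinearMap)
    ((TensorProduct.assoc K L L (L ⊗[K] L)).toLinearMap (r ⊗ₜ[K] r'))

/-- `[r₁₃, r'₂₃] = Σ (-1)^{|r'₁||r₂|} α(r₁) ⊗ α(r'₁) ⊗ [r₂,r'₂]`. -/
noncomputable def br1323 (σ : L →ₗ[K] L) (br : L →ₗ[K] L →ₗ[K] L) (α : L →ₗ[K] L)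
    (r r' : L ⊗[K] L) : L ⊗[K] (L ⊗[K] L) :=
  (TensorProduct.assoc K L L L).toLinearMap
    (TensorProduct.map (TensorProduct.map α α) (TensorProduct.lift br)
      (signedMidSwap σ (r ⊗ₜ[K] r')))

/-- The left-hand side `[[r,r]]^α` of the classical Hom-Yang-Baxter equation. -/
noncomputable def chybeEl (σ : L →ₗ[K] L) (br : L →ₗ[K] L →ₗ[K] L) (α : L →ₗ[K] L)
    (r : L ⊗[K] L) : L ⊗[K] (L ⊗[K] L) :=
  br1213 σ br α r r + br1223 br α r r + br1323 σ br α r r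

/-- A coboundary Hom-Lie superbialgebra. -/
def IsCoboundary (σ : L →ₗ[K] L) (br : L →ₗ[K] L →ₗ[K] L) (α : L →ₗ[K] L)
    (Δ : L →ₗ[K] L ⊗[K] L) (r : L ⊗[K] L) : Prop :=
  IsHomLieSuperbialgebra σ br α Δ
  ∧ TensorProduct.map α α r = r
  ∧ ∀ p x, IsHomog σ p x → Δ x = adT σ br α p x r

/-- A quasi-triangular Hom-Lie superbialgebra: a coboundary one where `r`
satisfies the classical Hom-Yang-Baxter equation. -/
def IsQuasiTriangular (σ : L →ₗ[K] L) (br : L →ₗ[K] L →ₗ[K] L) (α : L →ₗ[K] L)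
    (Δ : L →ₗ[K] L ⊗[K] L) (r : L ⊗[K] L) : Prop :=
  IsCoboundary σ br α Δ r ∧ chybeEl σ br α r = 0

/-- The global linear map `x ↦ ad_x(r) = Σ [x,r₁] ⊗ α(r₂) + (-1)^{|x||r₁|} α(r₁) ⊗ [x,r₂]`. -/
noncomputable def adMap (σ : L →ₗ[K] L) (br : L →ₗ[K] L →ₗ[K] L) (α : L →ₗ[K] L)
    (r : L ⊗[K] L) : L →ₗ[K] L ⊗[K] L :=
  (TensorProduct.map (TensorProduct.lift br) α
      ∘ₗ (TensorProduct.assoc K L L L).symm.toLinearMap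
    + TensorProduct.map α (TensorProduct.lift br)
        ∘ₗ (TensorProduct.assoc K L L L).toLinearMap
        ∘ₗ TensorProduct.map (superTwist σ) LinearMap.id
        ∘ₗ (TensorProduct.assoc K L L L).symm.toLinearMap)
  ∘ₗ (TensorProduct.mk K L (L ⊗[K] L)).flip r

end Defs

/-!
Write `ad r` for the linear map `x ↦ ad_x(r)` (`adMap`). Since homogeneous elements span `L`,
the coboundary condition says `Δ = ad r`, and evenness of `Δ` then gives
`ad ((σ ⊗ σ) r) = ad r`: the odd part of `r` acts trivially.

Expanding on homogeneous pure tensors, `(α ⊗ ad t)(s) = [s₁₂, t₂₃] + [s₁₃, t₂₃]` for all `s, t`,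
while skew-supersymmetry of the bracket gives
`(ad t ⊗ α)(s) = -[t₁₂, s₁₃] - [t₁₂, s₂₃]` up to a defect in which only the odd part of `t`
enters, through `ad`. For `s = t = r` the defect vanishes, so conditions (2) and (3) both say that
`[[r, r]]^α = [r₁₂, r₁₃] + [r₁₂, r₂₃] + [r₁₃, r₂₃]` is zero.
-/

section Homogeneous

variable {K : Type*} [Field K] {L : Type*} [AddCommGroup L] [Module K L] {σ : L →ₗ[K] L}

theorem exists_isHomog_add [NeZero (2 : K)] (hσ : σ ∘ₗ σ = LinearMap.id) (x : L) :
    ∃ x₀ x₁, IsHomog σ 0 x₀ ∧ IsHomog σ 1 x₁ ∧ x₀ + x₁ = x := by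
  have hσx : σ (σ x) = x := LinearMap.congr_fun hσ x
  refine ⟨(2 : K)⁻¹ • (x + σ x), (2 : K)⁻¹ • (x - σ x), ?_, ?_, ?_⟩
  · simp only [IsHomog, map_smul, map_add, hσx, ZMod.val_zero, pow_zero, one_smul, add_comm]
  · simp only [IsHomog, map_smul, map_sub, hσx, ZMod.val_one, pow_one, neg_one_smul]
    module
  · rw [← smul_add, add_add_sub_cancel, ← two_smul K, smul_smul,
      inv_mul_cancel₀ two_ne_zero, one_smul]

theorem LinearMap.ext_of_isHomog [NeZero (2 : K)] {V : Type*} [AddCommGroup V] [Module K V]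
    (hσ : σ ∘ₗ σ = LinearMap.id) {f g : L →ₗ[K] V}
    (h : ∀ p x, IsHomog σ p x → f x = g x) : f = g := by
  ext x
  obtain ⟨x₀, x₁, h₀, h₁, rfl⟩ := exists_isHomog_add hσ x
  rw [map_add, map_add, h 0 x₀ h₀, h 1 x₁ h₁]

theorem TensorProduct.induction_on_isHomog [NeZero (2 : K)] (hσ : σ ∘ₗ σ = LinearMap.id)
    {P : L ⊗[K] L → Prop} (t : L ⊗[K] L) (zero : P 0)
    (tmul : ∀ p q x y, IsHomog σ p x → IsHomog σ q y → P (x ⊗ₜ y))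
    (add : ∀ t u, P t → P u → P (t + u)) : P t := by
  induction t using TensorProduct.induction_on with
  | zero => exact zero
  | add t u ht hu => exact add t u ht hu
  | tmul x y =>
    obtain ⟨x₀, x₁, hx₀, hx₁, rfl⟩ := exists_isHomog_add hσ x
    obtain ⟨y₀, y₁, hy₀, hy₁, rfl⟩ := exists_isHomog_add hσ y
    simp only [add_tmul, tmul_add]
    refine add _ _ (add _ _ ?_ ?_) (add _ _ ?_ ?_) <;> apply tmul <;> assumption

end Homogeneous

section Signs

variable {K : Type*} [Field K] [NeZero (2 : K)] {L M : Type*} [AddCommGroup L] [Module K L]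
  [AddCommGroup M] [Module K M]

theorem inv_two_mul_sign_eq_eps (p q : ZMod 2) :
    (2 : K)⁻¹ * (1 + (-1) ^ p.val + (-1) ^ q.val - (-1) ^ p.val * (-1) ^ q.val) = eps K p q := by
  rw [inv_mul_eq_iff_eq_mul₀ two_ne_zero]
  fin_cases p <;> fin_cases q <;> norm_num [eps, ZMod.val]

theorem signOp_tmul {σL : L →ₗ[K] L} {σM : M →ₗ[K] M} {p q : ZMod 2} {x : L} {y : M}
    (hx : IsHomog σL p x) (hy : IsHomog σM q y) :
    signOp σL σM (x ⊗ₜ y) = eps K p q • (x ⊗ₜ y) := by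
  rw [IsHomog] at hx hy
  rw [signOp, ← inv_two_mul_sign_eq_eps]
  simp only [LinearMap.smul_apply, LinearMap.sub_apply, LinearMap.add_apply, map_tmul,
    LinearMap.id_apply, hx, hy, ← smul_tmul', tmul_smul, smul_smul]
  module

theorem signPow_apply {σ : L →ₗ[K] L} {q : ZMod 2} {x : L} (hx : IsHomog σ q x) (p : ZMod 2) :
    signPow σ p x = eps K p q • x := by
  rw [IsHomog] at hx
  have h : (2 : K)⁻¹ * (1 + (-1) ^ p.val) + (2 : K)⁻¹ * (1 - (-1) ^ p.val) * (-1) ^ q.val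
      = eps K p q := by
    rw [← inv_two_mul_sign_eq_eps]; ring
  rw [signPow, ← h]
  simp only [LinearMap.add_apply, LinearMap.smul_apply, LinearMap.id_apply, hx, smul_smul]
  module

theorem superTwist_tmul {σ : L →ₗ[K] L} {p q : ZMod 2} {x y : L}
    (hx : IsHomog σ p x) (hy : IsHomog σ q y) :
    superTwist σ (x ⊗ₜ y) = eps K p q • (y ⊗ₜ x) := by
  simp [superTwist, signOp_tmul hx hy]

theorem signedMidSwap_tmul {σ : L →ₗ[K] L} {q p' : ZMod 2} {x y z w : L}
    (hy : IsHomog σ q y) (hz : IsHomog σ p' z) :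
    signedMidSwap σ ((x ⊗ₜ y) ⊗ₜ (z ⊗ₜ w)) = eps K q p' • ((x ⊗ₜ z) ⊗ₜ (y ⊗ₜ w)) := by
  simp [signedMidSwap, superTwist_tmul hy hz, tmul_smul, smul_tmul']

end Signs

section Brackets

variable {K : Type*} [Field K] {L : Type*} [AddCommGroup L] [Module K L]
  {σ : L →ₗ[K] L} {br : L →ₗ[K] L →ₗ[K] L} {α : L →ₗ[K] L}

theorem br1213_tmul [NeZero (2 : K)] {q p' : ZMod 2} {x y z w : L}
    (hy : IsHomog σ q y) (hz : IsHomog σ p' z) :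
    br1213 σ br α (x ⊗ₜ y) (z ⊗ₜ w) = eps K q p' • (br x z ⊗ₜ (α y ⊗ₜ α w)) := by
  simp [br1213, signedMidSwap_tmul hy hz]

theorem br1223_tmul (x y z w : L) :
    br1223 br α (x ⊗ₜ y) (z ⊗ₜ w) = α x ⊗ₜ (br y z ⊗ₜ α w) := by
  simp [br1223]

theorem br1323_tmul [NeZero (2 : K)] {q p' : ZMod 2} {x y z w : L}
    (hy : IsHomog σ q y) (hz : IsHomog σ p' z) :
    br1323 σ br α (x ⊗ₜ y) (z ⊗ₜ w) = eps K q p' • (α x ⊗ₜ (α z ⊗ₜ br y w)) := by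
  simp [br1323, signedMidSwap_tmul hy hz]

theorem br1213_add_left (t u s : L ⊗[K] L) :
    br1213 σ br α (t + u) s = br1213 σ br α t s + br1213 σ br α u s := by
  simp [br1213, add_tmul]

theorem br1213_add_right (t u s : L ⊗[K] L) :
    br1213 σ br α s (t + u) = br1213 σ br α s t + br1213 σ br α s u := by
  simp [br1213, tmul_add]

theorem br1223_add_left (t u s : L ⊗[K] L) :
    br1223 br α (t + u) s = br1223 br α t s + br1223 br α u s := by
  simp [br1223, add_tmul]

theorem br1223_add_right (t u s : L ⊗[K] L) :
    br1223 br α s (t + u) = br1223 br α s t + br1223 br α s u := by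
  simp [br1223, tmul_add]

theorem br1323_add_left (t u s : L ⊗[K] L) :
    br1323 σ br α (t + u) s = br1323 σ br α t s + br1323 σ br α u s := by
  simp [br1323, add_tmul]

theorem br1323_add_right (t u s : L ⊗[K] L) :
    br1323 σ br α s (t + u) = br1323 σ br α s t + br1323 σ br α s u := by
  simp [br1323, tmul_add]

theorem adMap_tmul_apply [NeZero (2 : K)] {p p' : ZMod 2} {x y z : L}
    (hx : IsHomog σ p x) (hy : IsHomog σ p' y) :
    adMap σ br α (y ⊗ₜ z) x = br x y ⊗ₜ α z + eps K p p' • (α y ⊗ₜ br x z) := by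
  simp [adMap, superTwist_tmul hx hy, smul_tmul']

theorem adMap_add (t u : L ⊗[K] L) :
    adMap σ br α (t + u) = adMap σ br α t + adMap σ br α u := by
  ext x
  simp only [adMap, LinearMap.comp_apply, LinearMap.add_apply, map_add]

theorem adMap_smul (c : K) (t : L ⊗[K] L) :
    adMap σ br α (c • t) = c • adMap σ br α t := by
  ext x
  simp [adMap]

theorem adMap_sub (t u : L ⊗[K] L) :
    adMap σ br α (t - u) = adMap σ br α t - adMap σ br α u := by
  ext x
  simp only [adMap, LinearMap.comp_apply, LinearMap.sub_apply, map_sub]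

theorem adT_eq_adMap [NeZero (2 : K)] (hσ : σ ∘ₗ σ = LinearMap.id) {p : ZMod 2} {x : L}
    (hx : IsHomog σ p x) (t : L ⊗[K] L) : adT σ br α p x t = adMap σ br α t x := by
  induction t using TensorProduct.induction_on_isHomog hσ with
  | zero => simp [adMap]
  | tmul q q' y z hy _ => simp [adT, adMap_tmul_apply hx hy, signPow_apply hy, smul_tmul']
  | add t u ht hu => rw [map_add, ht, hu, adMap_add, LinearMap.add_apply]

end Brackets

section Identities

variable {K : Type*} [Field K] [NeZero (2 : K)] {L : Type*} [AddCommGroup L] [Module K L]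
  {σ : L →ₗ[K] L} {br : L →ₗ[K] L →ₗ[K] L} {α : L →ₗ[K] L}

theorem eq_adMap_of_isHomog (hσ : σ ∘ₗ σ = LinearMap.id) {Δ : L →ₗ[K] L ⊗[K] L}
    {r : L ⊗[K] L} (hΔ : ∀ p x, IsHomog σ p x → Δ x = adT σ br α p x r) :
    Δ = adMap σ br α r :=
  LinearMap.ext_of_isHomog hσ fun _ _ hx => (hΔ _ _ hx).trans (adT_eq_adMap hσ hx r)

theorem map_comp_adMap (hσ : σ ∘ₗ σ = LinearMap.id) (hbr : ∀ x y, σ (br x y) = br (σ x) (σ y))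
    (hσα : ∀ x, σ (α x) = α (σ x)) (t : L ⊗[K] L) :
    map σ σ ∘ₗ adMap σ br α t = adMap σ br α (map σ σ t) ∘ₗ σ := by
  refine LinearMap.ext_of_isHomog hσ fun p x hx => ?_
  have hσx : σ x = _ := hx
  rw [LinearMap.comp_apply, LinearMap.comp_apply, hσx, map_smul]
  induction t using TensorProduct.induction_on_isHomog hσ with
  | zero => simp [adMap]
  | add t u ht hu =>
    rw [adMap_add, LinearMap.add_apply, map_add, ht, hu, map_add, adMap_add, LinearMap.add_apply,
      smul_add]
  | tmul q q' y z hy hz =>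
    have hσy : σ y = _ := hy
    have hσz : σ z = _ := hz
    rw [adMap_tmul_apply hx hy, map_tmul, hσy, hσz, smul_tmul_smul, adMap_smul,
      LinearMap.smul_apply, adMap_tmul_apply hx hy]
    simp only [map_add, map_smul, map_tmul, hbr, hσα, hσx, hσy, hσz, LinearMap.smul_apply,
      tmul_smul, ← smul_tmul']
    module

theorem adMap_map_eq_of_map_comp_adMap (hσ : σ ∘ₗ σ = LinearMap.id)
    (hbr : ∀ x y, σ (br x y) = br (σ x) (σ y)) (hσα : ∀ x, σ (α x) = α (σ x)) {t : L ⊗[K] L}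
    (ht : map σ σ ∘ₗ adMap σ br α t = adMap σ br α t ∘ₗ σ) :
    adMap σ br α (map σ σ t) = adMap σ br α t := by
  have h := congrArg (· ∘ₗ σ) ((map_comp_adMap hσ hbr hσα t).symm.trans ht)
  simpa only [LinearMap.comp_assoc, hσ, LinearMap.comp_id] using h

theorem map_adMap_eq_br1223_add_br1323 (hσ : σ ∘ₗ σ = LinearMap.id) (s t : L ⊗[K] L) :
    map α (adMap σ br α t) s = br1223 br α s t + br1323 σ br α s t := by
  induction s using TensorProduct.induction_on_isHomog hσ with
  | zero => simp [br1223, br1323]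
  | add s s' hs hs' => rw [map_add, hs, hs', br1223_add_left, br1323_add_left]; abel
  | tmul p q x y _ hy =>
    rw [map_tmul]
    induction t using TensorProduct.induction_on_isHomog hσ with
    | zero => simp [adMap, br1223, br1323]
    | add t t' ht ht' =>
      rw [adMap_add, LinearMap.add_apply, tmul_add, ht, ht', br1223_add_right,
        br1323_add_right]
      abel
    | tmul p' q' z w hz _ =>
      rw [adMap_tmul_apply hy hz, br1223_tmul, br1323_tmul hy hz, tmul_add, tmul_smul]

theorem two_smul_assoc_map_adMap_add_br1213_add_br1223 (hσ : σ ∘ₗ σ = LinearMap.id)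
    (hskew : ∀ p q x y, IsHomog σ p x → IsHomog σ q y → br x y = -(eps K p q) • br y x)
    (s t : L ⊗[K] L) :
    (2 : K) • ((TensorProduct.assoc K L L L).toLinearMap (map (adMap σ br α t) α s)
        + br1213 σ br α t s + br1223 br α t s)
      = (TensorProduct.assoc K L L L).toLinearMap
          (map (adMap σ br α (t - map σ σ t) ∘ₗ (LinearMap.id - σ)) α s) := by
  induction s using TensorProduct.induction_on_isHomog hσ with
  | zero => simp [br1213, br1223]
  | add s s' hs hs' =>
    simp only [map_add, br1213_add_right, br1223_add_right]
    rw [← hs, ← hs']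
    module
  | tmul p q x y hx _ =>
    induction t using TensorProduct.induction_on_isHomog hσ with
    | zero => simp [adMap, br1213, br1223]
    | add t t' ht ht' =>
      rw [map_add, add_sub_add_comm, adMap_add, adMap_add, LinearMap.add_comp, map_add_left,
        map_add_left, LinearMap.add_apply, LinearMap.add_apply, map_add, map_add,
        br1213_add_left, br1223_add_left, ← ht, ← ht']
      module
    | tmul p' q' z w hz hw =>
      have hzw : z ⊗ₜ w - map σ σ (z ⊗ₜ w)
          = (1 - (-1 : K) ^ p'.val * (-1) ^ q'.val) • (z ⊗ₜ[K] w) := by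
        rw [map_tmul, hz, hw, smul_tmul_smul, sub_smul, one_smul]
      have hx' : (LinearMap.id - σ : L →ₗ[K] L) x = (1 - (-1 : K) ^ p.val) • x := by
        rw [LinearMap.sub_apply, LinearMap.id_apply, hx, sub_smul, one_smul]
      rw [hzw, adMap_smul, LinearMap.smul_comp, map_smul_left, LinearMap.smul_apply, map_smul,
        map_tmul, map_tmul, LinearMap.comp_apply, hx', map_smul, adMap_tmul_apply hx hz,
        br1213_tmul hw hx, br1223_tmul, hskew p' p z x hz hx, hskew q' p w x hw hx]
      simp only [add_tmul, ← smul_tmul', tmul_smul, map_add, map_smul,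
        LinearEquiv.coe_coe, assoc_tmul]
      fin_cases p <;> fin_cases p' <;> fin_cases q' <;> norm_num [eps, ZMod.val] <;> module

theorem assoc_map_adMap_eq_of_adMap_map_eq (hσ : σ ∘ₗ σ = LinearMap.id)
    (hskew : ∀ p q x y, IsHomog σ p x → IsHomog σ q y → br x y = -(eps K p q) • br y x)
    {t : L ⊗[K] L} (ht : adMap σ br α (map σ σ t) = adMap σ br α t) (s : L ⊗[K] L) :
    (TensorProduct.assoc K L L L).toLinearMap (map (adMap σ br α t) α s)
      = -br1213 σ br α t s - br1223 br α t s := by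
  have h := two_smul_assoc_map_adMap_add_br1213_add_br1223 (α := α) hσ hskew s t
  rw [adMap_sub, ht, sub_self, LinearMap.zero_comp, map_zero_left, LinearMap.zero_apply,
    map_zero, smul_eq_zero, or_iff_right two_ne_zero] at h
  linear_combination (norm := module) h

end Identities

/-- For a coboundary Hom-Lie superbialgebra, the CHYBE is
equivalent to `(α ⊗ Δ)(r) = -[r₁₂, r₁₃]` and to `(Δ ⊗ α)(r) = [r₁₃, r₂₃]`. -/
theorem coboundary_quasiTriangular_characterisations
    {K : Type*} [Field K] [CharZero K] {L : Type*} [AddCommGroup L] [Module K L]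
    (σ : L →ₗ[K] L) (br : L →ₗ[K] L →ₗ[K] L) (α : L →ₗ[K] L) (Δ : L →ₗ[K] L ⊗[K] L)
    (r : L ⊗[K] L)
    (hc : IsCoboundary σ br α Δ r) :
    (chybeEl σ br α r = 0 ↔ TensorProduct.map α Δ r = -br1213 σ br α r r)
      ∧ (chybeEl σ br α r = 0 ↔
          (TensorProduct.assoc K L L L).toLinearMap (TensorProduct.map Δ α r)
            = br1323 σ br α r r) := by
  obtain ⟨⟨⟨hσ, hbr, hσα, hskew, -⟩, ⟨-, -, heven, -, -⟩, -⟩, -, hΔ⟩ := hc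
  obtain rfl : Δ = adMap σ br α r := eq_adMap_of_isHomog hσ hΔ
  rw [map_adMap_eq_br1223_add_br1323 hσ,
    assoc_map_adMap_eq_of_adMap_map_eq hσ hskew (adMap_map_eq_of_map_comp_adMap hσ hbr hσα heven)]
  unfold chybeEl
  refine ⟨⟨fun h => ?_, fun h => ?_⟩, ⟨fun h => ?_, fun h => ?_⟩⟩
  · linear_combination (norm := module) h
  · linear_combination (norm := module) h
  · linear_combination (norm := module) -h
  · linear_combination (norm := module) -h
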